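/- arXiv:2502.08329 — 8 statements merged into one kernel-verified Lean document; each statement's English description precedes it below -/
import Mathlib

section
/- Let g > 0, h₀ > 0, u₀ > 0, b₁ > b₀, and χ ≥ 0 be real numbers. The cubic equation h₁³ − (h₀² + (2/g)·h₀·u₀² − 2(b₁ − b₀)·χ)·h₁ + 2·h₀²·u₀²/g = 0 has a solution h₁ > 0 if and only if χ ≤ χ̄, where χ̄ := (h₀² + (2/g)·h₀·u₀² − 3·g^(−2/3)·u₀^(4/3)·h₀^(4/3))/(2(b₁ − b₀)). -/
/-- The cubic equation `h₁³ − (h₀² + (2/g)h₀u₀² − 2(b₁−b₀)χ)h₁ + 2h₀²u₀²/g = 0`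
has a positive solution iff `χ ≤ χ̄`. -/
theorem stmt_1 (g h₀ u₀ b₀ b₁ χ : ℝ)
    (hg : 0 < g) (hh₀ : 0 < h₀) (hu₀ : 0 < u₀) (hb : b₀ < b₁) (hχ : 0 ≤ χ) :
    (∃ h₁ : ℝ, 0 < h₁ ∧
        h₁ ^ 3 - (h₀ ^ 2 + (2 / g) * h₀ * u₀ ^ 2 - 2 * (b₁ - b₀) * χ) * h₁
          + 2 * h₀ ^ 2 * u₀ ^ 2 / g = 0) ↔
      χ ≤ (h₀ ^ 2 + (2 / g) * h₀ * u₀ ^ 2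
            - 3 * g ^ (-(2 : ℝ) / 3) * u₀ ^ ((4 : ℝ) / 3) * h₀ ^ ((4 : ℝ) / 3))
          / (2 * (b₁ - b₀)) := by
  have hbb : (0:ℝ) < 2 * (b₁ - b₀) := by linarith
  obtain ⟨c, hcdef⟩ : ∃ c : ℝ, c = h₀ ^ 2 * u₀ ^ 2 / g := ⟨_, rfl⟩
  have hc : (0:ℝ) < c := by rw [hcdef]; positivity
  obtain ⟨t, htdef⟩ : ∃ t : ℝ, t = c ^ ((1:ℝ)/3) := ⟨_, rfl⟩
  have ht : 0 < t := htdef ▸ Real.rpow_pos_of_pos hc _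
  have ht3 : t ^ 3 = c := by
    rw [htdef, ← Real.rpow_natCast (c ^ ((1:ℝ)/3)) 3, ← Real.rpow_mul hc.le]
    norm_num
  have ht2 : t ^ 2 = c ^ ((2:ℝ)/3) := by
    rw [htdef, ← Real.rpow_natCast (c ^ ((1:ℝ)/3)) 2, ← Real.rpow_mul hc.le]
    norm_num
  have hK : 3 * g ^ (-(2:ℝ) / 3) * u₀ ^ ((4:ℝ)/3) * h₀ ^ ((4:ℝ)/3) = 3 * t ^ 2 := by
    rw [ht2, hcdef]
    have hrw : h₀ ^ 2 * u₀ ^ 2 / g = h₀ ^ (((2:ℕ)):ℝ) * u₀ ^ (((2:ℕ)):ℝ) * g ^ (-(1:ℝ)) := by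
      rw [Real.rpow_natCast, Real.rpow_natCast, Real.rpow_neg_one]
      ring
    rw [hrw, Real.mul_rpow (by positivity) (by positivity),
      Real.mul_rpow (by positivity) (by positivity),
      ← Real.rpow_mul hh₀.le, ← Real.rpow_mul hu₀.le, ← Real.rpow_mul hg.le]
    norm_num
    ring
  have h2c : 2 * h₀ ^ 2 * u₀ ^ 2 / g = 2 * c := by rw [hcdef]; ring
  obtain ⟨A, hAdef⟩ : ∃ A : ℝ, A = h₀ ^ 2 + (2 / g) * h₀ * u₀ ^ 2 - 2 * (b₁ - b₀) * χ :=
    ⟨_, rfl⟩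
  rw [← hAdef, h2c, hK, le_div_iff₀ hbb]
  have hiff2 : χ * (2 * (b₁ - b₀)) ≤ h₀ ^ 2 + (2 / g) * h₀ * u₀ ^ 2 - 3 * t ^ 2 ↔
      3 * t ^ 2 ≤ A := by
    constructor <;> intro h <;> [skip; skip] <;> rw [hAdef] at * <;> linarith
  rw [hiff2]
  constructor
  · rintro ⟨h₁, hp, heq⟩
    have amgm : 3 * t ^ 2 * h₁ ≤ h₁ ^ 3 + 2 * t ^ 3 := by
      nlinarith [mul_nonneg (sq_nonneg (h₁ - t)) (by positivity : (0:ℝ) ≤ h₁ + 2 * t)]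
    have hAh : A * h₁ = h₁ ^ 3 + 2 * c := by linarith
    have : 3 * t ^ 2 * h₁ ≤ A * h₁ := by rw [hAh]; nlinarith [ht3]
    exact le_of_mul_le_mul_right this hp
  · intro key
    have hcont : Continuous fun x : ℝ => x ^ 3 - A * x + 2 * c := by fun_prop
    have hft : t ^ 3 - A * t + 2 * c ≤ 0 := by
      nlinarith [mul_le_mul_of_nonneg_right key ht.le]
    have hf0 : (0:ℝ) ≤ (0:ℝ) ^ 3 - A * 0 + 2 * c := by nlinarith
    have hsub := intermediate_value_Icc' ht.le hcont.continuousOn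
    obtain ⟨x, hxmem, hfx⟩ := hsub ⟨hft, hf0⟩
    have hfx' : x ^ 3 - A * x + 2 * c = 0 := hfx
    refine ⟨x, ?_, ?_⟩
    · rcases hxmem.1.lt_or_eq with h | h
      · exact h
      · exfalso
        rw [← h] at hfx'
        nlinarith
    · linarith [hfx']
end

section
/- Let g > 0, u₀ > 0, b₁ > b₀ > 0 with [b] := b₁ − b₀, and h₀ > [b] be real numbers, set y := u₀²/(g·h₀), and assume y ≤ 1 and [b] ≤ (h₀/2)·(3 − √(1 + 8y)). Define the admissible set S := { h₁ ∈ ℝ : 0 < h₁ ≤ h₀ − [b] and χ(h₁) ≥ 0 } and the energy-flux function H₀(h₁) := g·h₀·u₀·(h₁ + b₁) + h₀³·u₀³/(2·h₁²). Then S is nonempty and H₀ has a unique minimizer on S, given by h₁* = (h₀²·u₀²/g)^(1/3) if (h₀²·u₀²/g)^(1/3) ≤ h₀ − [b], and h₁* = h₀ − [b] otherwise. -/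
/-- Intermediate depth of the stationary shadow wave as a function of `h₁`. -/
noncomputable def chiFun (g h₀ u₀ b₀ b₁ h₁ : ℝ) : ℝ :=
  ((1 + 2 * (u₀ ^ 2 / (g * h₀))) * h₀ ^ 2 - h₁ ^ 2
    - 2 * (u₀ ^ 2 / (g * h₀)) * h₀ ^ 3 / h₁) / (2 * (b₁ - b₀))

/-- Part of the local energy production depending on the right-hand depth `h₁`. -/
noncomputable def Hzero (g h₀ u₀ b₁ h₁ : ℝ) : ℝ :=
  g * h₀ * u₀ * (h₁ + b₁) + h₀ ^ 3 * u₀ ^ 3 / (2 * h₁ ^ 2)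

set_option maxHeartbeats 1600000 in
/-- Under the stated conditions, the admissible set `S` is nonempty and `H₀`
has a unique minimizer on `S`, given by `(h₀²u₀²/g)^(1/3)` if that value
satisfies the entropy condition, and by `h₀ − [b]` otherwise. -/
theorem stmt_4 (g h₀ u₀ b₀ b₁ : ℝ)
    (hg : 0 < g) (hu₀ : 0 < u₀) (hb₀ : 0 < b₀) (hb : b₀ < b₁)
    (hh₀ : b₁ - b₀ < h₀)
    (hy : u₀ ^ 2 / (g * h₀) ≤ 1)
    (hbb : b₁ - b₀ ≤ (h₀ / 2) * (3 - Real.sqrt (1 + 8 * (u₀ ^ 2 / (g * h₀))))) :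
    ∃ hstar : ℝ,
      hstar = (if (h₀ ^ 2 * u₀ ^ 2 / g) ^ ((1 : ℝ) / 3) ≤ h₀ - (b₁ - b₀)
        then (h₀ ^ 2 * u₀ ^ 2 / g) ^ ((1 : ℝ) / 3) else h₀ - (b₁ - b₀)) ∧
      hstar ∈ {h₁ : ℝ | 0 < h₁ ∧ h₁ ≤ h₀ - (b₁ - b₀) ∧ 0 ≤ chiFun g h₀ u₀ b₀ b₁ h₁} ∧
      ∀ h₁ ∈ {h₁ : ℝ | 0 < h₁ ∧ h₁ ≤ h₀ - (b₁ - b₀) ∧ 0 ≤ chiFun g h₀ u₀ b₀ b₁ h₁},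
        h₁ ≠ hstar → Hzero g h₀ u₀ b₁ hstar < Hzero g h₀ u₀ b₁ h₁ := by
  have hbpos : (0:ℝ) < b₁ - b₀ := sub_pos.2 hb
  have hh0 : (0:ℝ) < h₀ := hbpos.trans hh₀
  have hgh : (0:ℝ) < g * h₀ := mul_pos hg hh0
  set y := u₀ ^ 2 / (g * h₀) with hy_def
  have hypos : 0 < y := div_pos (pow_pos hu₀ 2) hgh
  have hx : (0:ℝ) < h₀ ^ 2 * u₀ ^ 2 / g := by positivity
  set c := (h₀ ^ 2 * u₀ ^ 2 / g) ^ ((1:ℝ)/3) with hc_def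
  have hcpos : 0 < c := Real.rpow_pos_of_pos hx _
  have hc3 : c ^ 3 = y * h₀ ^ 3 := by
    have h1 : c ^ (3:ℕ) = (h₀ ^ 2 * u₀ ^ 2 / g) := by
      rw [hc_def, ← Real.rpow_natCast ((h₀ ^ 2 * u₀ ^ 2 / g) ^ ((1:ℝ)/3)) 3,
        ← Real.rpow_mul hx.le]
      norm_num
    rw [h1, hy_def]
    field_simp
  have hcle : c ≤ h₀ := by
    have h3 : c ^ 3 ≤ h₀ ^ 3 := by nlinarith [pow_pos hh0 3]
    exact le_of_pow_le_pow_left₀ (by norm_num) hh0.le h3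
  clear_value c
  -- χ nonnegativity criterion
  have chi_nonneg : ∀ h : ℝ, 0 < h → h ≤ h₀ → 2*y*h₀^2 ≤ h^2 + h₀*h →
      0 ≤ chiFun g h₀ u₀ b₀ b₁ h := by
    intro h hp hle hq
    unfold chiFun
    rw [← hy_def]
    apply div_nonneg _ (by linarith)
    have key : 0 ≤ ((1 + 2*y)*h₀^2 - h^2)*h - 2*y*h₀^3 := by
      nlinarith [mul_nonneg (sub_nonneg.2 hle)
        (show (0:ℝ) ≤ h^2 + h₀*h - 2*y*h₀^2 by linarith)]
    have hdiv : 2*y*h₀^3/h ≤ (1 + 2*y)*h₀^2 - h^2 := by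
      rw [div_le_iff₀ hp]; nlinarith [key]
    linarith
  have hH1 : h₀ ^ 3 * u₀ ^ 3 = g * h₀ * u₀ * c ^ 3 := by
    rw [hc3, hy_def]; field_simp
  -- strict minimality when the critical point is admissible
  have lemA : ∀ b : ℝ, 0 < b → b ≠ c → Hzero g h₀ u₀ b₁ c < Hzero g h₀ u₀ b₁ b := by
    intro b hbp hne
    have e : Hzero g h₀ u₀ b₁ b - Hzero g h₀ u₀ b₁ c
        = g * h₀ * u₀ * ((b - c) ^ 2 * (2 * b + c)) / (2 * b ^ 2) := by
      unfold Hzero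
      rw [hH1]
      field_simp
      ring
    have h2 : 0 < (b - c) ^ 2 := pow_two_pos_of_ne_zero (sub_ne_zero.2 hne)
    have hpos : 0 < Hzero g h₀ u₀ b₁ b - Hzero g h₀ u₀ b₁ c := by
      rw [e]
      apply div_pos
      · exact mul_pos (by positivity) (mul_pos h2 (by linarith))
      · positivity
    linarith
  -- strict monotonicity left of the critical point
  have lemB : ∀ a b : ℝ, 0 < b → b < a → a < c →
      Hzero g h₀ u₀ b₁ a < Hzero g h₀ u₀ b₁ b := by
    intro a b hbp hba hac
    have hap : 0 < a := hbp.trans hba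
    have e : Hzero g h₀ u₀ b₁ b - Hzero g h₀ u₀ b₁ a
        = g * h₀ * u₀ * ((a - b) * (c ^ 3 * (a + b) - 2 * a ^ 2 * b ^ 2))
          / (2 * a ^ 2 * b ^ 2) := by
      unfold Hzero
      rw [hH1]
      field_simp
      ring
    have h1 : a ^ 3 < c ^ 3 := by
      nlinarith [mul_pos hap hcpos, mul_pos hap hap, mul_pos hcpos hcpos, sq_nonneg (a + c), sq_nonneg (a - c)]
    have hkey : 0 < c ^ 3 * (a + b) - 2 * a ^ 2 * b ^ 2 := by
      nlinarith [mul_pos (mul_pos (pow_pos hap 2) (sub_pos.2 hba))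
          (show (0:ℝ) < a + 2*b by linarith),
        mul_lt_mul_of_pos_right h1 (show (0:ℝ) < a + b by linarith)]
    have hpos : 0 < Hzero g h₀ u₀ b₁ b - Hzero g h₀ u₀ b₁ a := by
      rw [e]
      apply div_pos
      · exact mul_pos (by positivity) (mul_pos (sub_pos.2 hba) hkey)
      · positivity
    linarith
  by_cases hif : c ≤ h₀ - (b₁ - b₀)
  · refine ⟨c, ?_, ⟨hcpos, hif, ?_⟩, ?_⟩
    · rw [if_pos hif]
    · apply chi_nonneg c hcpos hcle
      nlinarith [mul_nonneg (mul_nonneg hcpos.le (sub_nonneg.2 hcle))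
        (show (0:ℝ) ≤ h₀ + 2*c by linarith), hh0, hc3]
    · intro h₁ hmem hne
      exact lemA h₁ hmem.1 hne
  · push_neg at hif
    have hapos : 0 < h₀ - (b₁ - b₀) := sub_pos.2 hh₀
    refine ⟨h₀ - (b₁ - b₀), ?_, ⟨hapos, le_refl _, ?_⟩, ?_⟩
    · rw [if_neg (not_le.2 hif)]
    · set s := Real.sqrt (1 + 8 * y) with hs_def
      have hs2 : s ^ 2 = 1 + 8 * y := Real.sq_sqrt (by positivity)
      have hs1 : 1 ≤ s := by
        have h1 : (1:ℝ) ≤ 1 + 8 * y := by linarith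
        calc (1:ℝ) = Real.sqrt 1 := Real.sqrt_one.symm
          _ ≤ s := Real.sqrt_le_sqrt h1
      have hm : h₀/2*(s-1) ≤ h₀ - (b₁ - b₀) := by linarith
      have hm0 : 0 ≤ h₀/2*(s-1) := mul_nonneg (by linarith) (by linarith)
      have hmm : (h₀/2*(s-1))^2 + h₀*(h₀/2*(s-1)) = 2*y*h₀^2 := by
        linear_combination (h₀^2/4) * hs2
      apply chi_nonneg _ hapos (by linarith)
      nlinarith [hmm, mul_nonneg (sub_nonneg.2 hm)
        (show (0:ℝ) ≤ (h₀ - (b₁ - b₀)) + h₀/2*(s-1) + h₀ by linarith)]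
    · intro h₁ hmem hne
      obtain ⟨h1p, h1le, -⟩ := hmem
      exact lemB _ h₁ h1p (lt_of_le_of_ne h1le hne) hif
end

section
/- Let g > 0, h₀ > 0, b₁ > b₀, and u₀ be real numbers with y := u₀²/(g·h₀) ≤ 1. Then for every h₁ with 0 < h₁ ≤ h₀ one has χ(h₁) ≥ 0 if and only if h₁ ≥ (h₀/2)·(√(1 + 8y) − 1). -/
/-- If `y = u₀²/(gh₀) ≤ 1`, then for `0 < h₁ ≤ h₀` one has `χ(h₁) ≥ 0` iff
`h₁ ≥ (h₀/2)(√(1+8y) − 1)`. -/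
theorem stmt_6 (g h₀ u₀ b₀ b₁ : ℝ) (hg : 0 < g) (hh₀ : 0 < h₀) (hb : b₀ < b₁)
    (hy : u₀ ^ 2 / (g * h₀) ≤ 1) :
    ∀ h₁ : ℝ, 0 < h₁ → h₁ ≤ h₀ →
      (0 ≤ chiFun g h₀ u₀ b₀ b₁ h₁ ↔
        (h₀ / 2) * (Real.sqrt (1 + 8 * (u₀ ^ 2 / (g * h₀))) - 1) ≤ h₁) := by
  intro h₁ hh1 hle
  have hgh : 0 < g * h₀ := mul_pos hg hh₀
  set y := u₀ ^ 2 / (g * h₀) with hy_def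
  have hy0 : 0 ≤ y := div_nonneg (sq_nonneg _) hgh.le
  have h8 : (0:ℝ) ≤ 1 + 8 * y := by linarith
  set s := Real.sqrt (1 + 8 * y) with hs_def
  have hs2 : s ^ 2 = 1 + 8 * y := Real.sq_sqrt h8
  have hs0 : 0 ≤ s := Real.sqrt_nonneg _
  have hs1 : 1 ≤ s := by nlinarith
  have hs3 : s ≤ 3 := by nlinarith
  set r := (h₀ / 2) * (s - 1) with hr_def
  have hr0 : 0 ≤ r := by
    apply mul_nonneg (by linarith) (by linarith)
  have hrh : r ≤ h₀ := by
    rw [hr_def]; nlinarith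
  have hy' : y = (s ^ 2 - 1) / 8 := by linarith
  have hbpos : 0 < 2 * (b₁ - b₀) := by linarith
  rw [chiFun, le_div_iff₀ hbpos, zero_mul]
  rw [← mul_nonneg_iff_of_pos_right hh1]
  have key : ((1 + 2 * y) * h₀ ^ 2 - h₁ ^ 2 - 2 * y * h₀ ^ 3 / h₁) * h₁
      = (h₀ - h₁) * ((h₁ - r) * (h₁ + h₀ + r)) := by
    rw [hy', hr_def]
    field_simp
    ring
  rw [key]
  constructor
  · intro hprod
    by_contra hcon
    push_neg at hcon
    have h1h : h₁ < h₀ := lt_of_lt_of_le hcon hrh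
    nlinarith [mul_pos (sub_pos.2 h1h) (mul_pos (sub_pos.2 hcon) (by linarith : (0:ℝ) < h₁ + h₀ + r))]
  · intro hle'
    exact mul_nonneg (by linarith) (mul_nonneg (by linarith) (by linarith))
end

section
/- Let g > 0, h₀ > 0, b₁ > b₀, and u₀ be real numbers with y := u₀²/(g·h₀) > 1. Then χ(h₁) < 0 for every h₁ with 0 < h₁ < h₀, while χ(h₀) = 0; in particular there is no h₁ ∈ (0, h₀) with nonnegative intermediate depth. -/
/-- If `y = u₀²/(gh₀) > 1` then `χ(h₁) < 0` for all `0 < h₁ < h₀`, while `χ(h₀) = 0`. -/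
theorem stmt_7 (g h₀ u₀ b₀ b₁ : ℝ) (hg : 0 < g) (hh₀ : 0 < h₀) (hb : b₀ < b₁)
    (hy : 1 < u₀ ^ 2 / (g * h₀)) :
    (∀ h₁ : ℝ, 0 < h₁ → h₁ < h₀ → chiFun g h₀ u₀ b₀ b₁ h₁ < 0) ∧
    chiFun g h₀ u₀ b₀ b₁ h₀ = 0 := by
  set y := u₀ ^ 2 / (g * h₀) with hy'
  constructor
  · intro h₁ hp hlt
    unfold chiFun
    rw [← hy']
    apply div_neg_of_neg_of_pos _ (by linarith)
    have key : ((1 + 2 * y) * h₀ ^ 2 - h₁ ^ 2) * h₁ - 2 * y * h₀ ^ 3 < 0 := by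
      nlinarith [mul_pos (sub_pos.mpr hlt) (show 0 < 2 * y * h₀ ^ 2 - h₁ ^ 2 - h₀ * h₁ by
        nlinarith)]
    have h2 : 2 * y * h₀ ^ 3 / h₁ = 2 * y * h₀ ^ 3 * h₁⁻¹ := by ring
    rw [sub_neg, h2, ← div_eq_mul_inv, lt_div_iff₀ hp]
    linarith
  · unfold chiFun
    rw [← hy']
    have : (1 + 2 * y) * h₀ ^ 2 - h₀ ^ 2 - 2 * y * h₀ ^ 3 / h₀ = 0 := by
      field_simp; ring
    rw [this, zero_div]
end

section
/- Let g > 0, h₀ > 0, u₀ ≠ 0, and b₁ > b₀ be real numbers. The function χ(h₁) := ((1 + 2y)·h₀² − h₁² − 2y·h₀³/h₁)/(2(b₁ − b₀)), y := u₀²/(g·h₀), is strictly increasing on (0, h̄₁] and strictly decreasing on [h̄₁, ∞), where h̄₁ := (h₀²·u₀²/g)^(1/3); moreover its maximum value is χ(h̄₁) = (h₀² + (2/g)·h₀·u₀² − 3·g^(−2/3)·(u₀²)^(2/3)·h₀^(4/3))/(2(b₁ − b₀)) = χ̄. -/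
/-- `χ` is strictly increasing on `(0, h̄₁]` and strictly decreasing on `[h̄₁, ∞)`,
`h̄₁ = (h₀²u₀²/g)^(1/3)`; its maximum value is `χ(h̄₁) = χ̄`. -/
theorem stmt_8 (g h₀ u₀ b₀ b₁ : ℝ) (hg : 0 < g) (hh₀ : 0 < h₀) (hu₀ : u₀ ≠ 0)
    (hb : b₀ < b₁) :
    StrictMonoOn (chiFun g h₀ u₀ b₀ b₁)
      (Set.Ioc 0 ((h₀ ^ 2 * u₀ ^ 2 / g) ^ ((1 : ℝ) / 3))) ∧
    StrictAntiOn (chiFun g h₀ u₀ b₀ b₁)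
      (Set.Ici ((h₀ ^ 2 * u₀ ^ 2 / g) ^ ((1 : ℝ) / 3))) ∧
    chiFun g h₀ u₀ b₀ b₁ ((h₀ ^ 2 * u₀ ^ 2 / g) ^ ((1 : ℝ) / 3)) =
      (h₀ ^ 2 + (2 / g) * h₀ * u₀ ^ 2
        - 3 * g ^ (-(2 : ℝ) / 3) * (u₀ ^ 2) ^ ((2 : ℝ) / 3) * h₀ ^ ((4 : ℝ) / 3))
        / (2 * (b₁ - b₀)) := by
  have hd : (0:ℝ) < 2 * (b₁ - b₀) := by linarith
  have hu2 : 0 < u₀ ^ 2 := by positivity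
  set c : ℝ := (h₀ ^ 2 * u₀ ^ 2 / g) ^ ((1 : ℝ) / 3) with hcdef
  have hX : 0 < h₀ ^ 2 * u₀ ^ 2 / g := by positivity
  have hcpos : 0 < c := Real.rpow_pos_of_pos hX _
  have hc3 : c ^ 3 = h₀ ^ 2 * u₀ ^ 2 / g := by
    rw [hcdef, ← Real.rpow_natCast (_ ^ ((1:ℝ)/3)) 3, ← Real.rpow_mul hX.le]
    norm_num
  have hA : 2 * (u₀ ^ 2 / (g * h₀)) * h₀ ^ 3 = 2 * c ^ 3 := by
    rw [hc3]; field_simp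
  have key : ∀ a b : ℝ, 0 < a → 0 < b → a < b → a * b * (a + b) < 2 * c ^ 3 →
      chiFun g h₀ u₀ b₀ b₁ a < chiFun g h₀ u₀ b₀ b₁ b := by
    intro a b ha hb hab hsum
    have key2 : b ^ 2 + 2 * c ^ 3 / b < a ^ 2 + 2 * c ^ 3 / a := by
      rw [add_div' _ _ _ hb.ne', add_div' _ _ _ ha.ne', div_lt_div_iff₀ hb ha]
      nlinarith [mul_pos (sub_pos.mpr hsum) (sub_pos.mpr hab)]
    unfold chiFun
    rw [hA, div_lt_div_iff₀ hd hd]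
    nlinarith [key2, hd]
  have key' : ∀ a b : ℝ, 0 < a → 0 < b → a < b → 2 * c ^ 3 < a * b * (a + b) →
      chiFun g h₀ u₀ b₀ b₁ b < chiFun g h₀ u₀ b₀ b₁ a := by
    intro a b ha hb hab hsum
    have key2 : a ^ 2 + 2 * c ^ 3 / a < b ^ 2 + 2 * c ^ 3 / b := by
      rw [add_div' _ _ _ hb.ne', add_div' _ _ _ ha.ne', div_lt_div_iff₀ ha hb]
      nlinarith [mul_pos (sub_pos.mpr hsum) (sub_pos.mpr hab)]
    unfold chiFun
    rw [hA, div_lt_div_iff₀ hd hd]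
    nlinarith [key2, hd]
  refine ⟨?_, ?_, ?_⟩
  · intro a ha b hb hab
    have hbpos : 0 < b := lt_trans ha.1 hab
    have hac : a < c := lt_of_lt_of_le hab hb.2
    have h1 : a * b < c * c := mul_lt_mul hac hb.2 hbpos hcpos.le
    refine key a b ha.1 hbpos hab ?_
    nlinarith [mul_pos hcpos (sub_pos.mpr h1),
      mul_nonneg (mul_pos ha.1 hbpos).le (by linarith [hb.2, hac.le] : (0:ℝ) ≤ c - a + (c - b))]
  · intro a ha b hb hab
    refine key' a b (lt_of_lt_of_le hcpos ha) (lt_of_lt_of_le hcpos (le_of_lt (lt_of_le_of_lt ha hab))) hab ?_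
    have ha' : c ≤ a := ha
    have hb' : c < b := lt_of_le_of_lt ha hab
    have hapos : 0 < a := lt_of_lt_of_le hcpos ha'
    have hbpos : 0 < b := lt_trans hapos hab
    have h1 : c * c < a * b := mul_lt_mul' ha' hb' hcpos.le hapos
    nlinarith [mul_pos hcpos (sub_pos.mpr h1),
      mul_nonneg (mul_pos hapos hbpos).le (by linarith : (0:ℝ) ≤ a - c + (b - c))]
  · have hc2 : c ^ 2 = g ^ (-(2:ℝ)/3) * (u₀ ^ 2) ^ ((2:ℝ)/3) * h₀ ^ ((4:ℝ)/3) := by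
      have : c ^ 2 = (h₀ ^ 2 * u₀ ^ 2 / g) ^ ((2:ℝ)/3) := by
        rw [hcdef, ← Real.rpow_natCast (_ ^ ((1:ℝ)/3)) 2, ← Real.rpow_mul hX.le]
        norm_num
      rw [this, div_eq_mul_inv, Real.mul_rpow (by positivity) (by positivity),
        Real.mul_rpow (by positivity) (by positivity),
        ← Real.rpow_natCast h₀ 2, ← Real.rpow_mul hh₀.le,
        ← Real.rpow_neg_one g, ← Real.rpow_mul hg.le]
      push_cast
      ring_nf
    have hdivc : 2 * c ^ 3 / c = 2 * c ^ 2 := by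
      field_simp
    unfold chiFun
    rw [hA, hdivc, hc2]
    congr 1
    field_simp
    ring
end

section
/- Let g > 0, h_l > 0, h₀ > 0, and u_l ≥ 0 be real numbers, let h* satisfy 0 < h* ≤ min{h_l, h₀}, and set u₀ := u_l + √(g·h_l) − 2·√(g·h*) + √(g·h₀). Then u₀ − u_l ≥ √g·|√h₀ − √h_l| ≥ 0; in particular u₀ + √(g·h₀) > 0, so the composed R₁+R₂ wave pattern cannot satisfy the left-sided condition u₀ + √(g·h₀) < 0. -/
/-- For the composed `R₁+R₂` pattern with `u₀ = u_l + √(gh_l) − 2√(gh*) + √(gh₀)`,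
`h* ≤ min{h_l,h₀}`, one has `u₀ − u_l ≥ √g |√h₀ − √h_l| ≥ 0` and
`u₀ + √(gh₀) > 0`, so the left-sided condition `u₀ + √(gh₀) < 0` fails. -/
theorem stmt_9 (g hl h₀ ul hstar : ℝ)
    (hg : 0 < g) (hhl : 0 < hl) (hh₀ : 0 < h₀) (hul : 0 ≤ ul)
    (hs : 0 < hstar) (hsmin : hstar ≤ min hl h₀) :
    0 ≤ Real.sqrt g * |Real.sqrt h₀ - Real.sqrt hl| ∧
    Real.sqrt g * |Real.sqrt h₀ - Real.sqrt hl| ≤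
      (ul + Real.sqrt (g * hl) - 2 * Real.sqrt (g * hstar) + Real.sqrt (g * h₀)) - ul ∧
    0 < (ul + Real.sqrt (g * hl) - 2 * Real.sqrt (g * hstar) + Real.sqrt (g * h₀))
        + Real.sqrt (g * h₀) := by
  have hg' := hg.le
  have hsg : 0 < Real.sqrt g := Real.sqrt_pos.mpr hg
  have e1 : Real.sqrt (g * hl) = Real.sqrt g * Real.sqrt hl := Real.sqrt_mul hg' hl
  have e2 : Real.sqrt (g * h₀) = Real.sqrt g * Real.sqrt h₀ := Real.sqrt_mul hg' h₀
  have e3 : Real.sqrt (g * hstar) = Real.sqrt g * Real.sqrt hstar := Real.sqrt_mul hg' hstar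
  have hsl : Real.sqrt hstar ≤ Real.sqrt hl :=
    Real.sqrt_le_sqrt (le_trans hsmin (min_le_left _ _))
  have hs0 : Real.sqrt hstar ≤ Real.sqrt h₀ :=
    Real.sqrt_le_sqrt (le_trans hsmin (min_le_right _ _))
  have key : |Real.sqrt h₀ - Real.sqrt hl| ≤ Real.sqrt hl + Real.sqrt h₀ - 2 * Real.sqrt hstar := by
    rw [abs_le]
    constructor <;> nlinarith
  have h0pos : 0 < Real.sqrt h₀ := Real.sqrt_pos.mpr hh₀
  refine ⟨mul_nonneg hsg.le (abs_nonneg _), ?_, ?_⟩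
  · rw [e1, e2, e3]
    nlinarith [mul_le_mul_of_nonneg_left key hsg.le]
  · rw [e1, e2, e3]
    nlinarith [mul_le_mul_of_nonneg_left key hsg.le, mul_pos hsg h0pos, abs_nonneg (Real.sqrt h₀ - Real.sqrt hl)]
end

section
/- Let g > 0, h_l > 0, and real numbers u_l and K be given. The function φ(h) := u_l − √((g/2)·(1/h_l + 1/h))·(h − h_l) + K − √(g·h) is strictly decreasing on (h_l, ∞). -/
/-- The function `φ(h) = u_l − √((g/2)(1/h_l + 1/h))(h − h_l) + K − √(gh)` is
strictly decreasing on `(h_l, ∞)`. -/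
theorem stmt_10 (g hl ul K : ℝ) (hg : 0 < g) (hhl : 0 < hl) :
    StrictAntiOn
      (fun h : ℝ => ul - Real.sqrt ((g / 2) * (1 / hl + 1 / h)) * (h - hl)
        + K - Real.sqrt (g * h))
      (Set.Ioi hl) := by
  intro a ha b hb hab
  simp only [Set.mem_Ioi] at ha hb
  have ha0 : 0 < a := hhl.trans ha
  have hb0 : 0 < b := hhl.trans hb
  have h1 : ∀ h : ℝ, hl < h → Real.sqrt ((g/2)*(1/hl+1/h)) * (h - hl)
      = Real.sqrt ((g/2)*(1/hl+1/h) * (h - hl)^2) := by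
    intro h hh
    have h0 : 0 < h := hhl.trans hh
    rw [Real.sqrt_mul (by positivity) ((h-hl)^2), Real.sqrt_sq (by linarith)]
  have key : Real.sqrt ((g/2)*(1/hl+1/a)) * (a - hl)
      < Real.sqrt ((g/2)*(1/hl+1/b)) * (b - hl) := by
    rw [h1 a ha, h1 b hb]
    apply Real.sqrt_lt_sqrt (by positivity)
    have hfa : (g/2)*(1/hl+1/a) * (a - hl)^2 = (g/2)*((a+hl)*(a-hl)^2)/(a*hl) := by
      field_simp
    have hfb : (g/2)*(1/hl+1/b) * (b - hl)^2 = (g/2)*((b+hl)*(b-hl)^2)/(b*hl) := by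
      field_simp
    rw [hfa, hfb, div_lt_div_iff₀ (by positivity) (by positivity)]
    have h2 : b*((a+hl)*(a-hl)^2) < a*((b+hl)*(b-hl)^2) := by
      nlinarith [mul_pos (sub_pos.2 ha) (sub_pos.2 hab), mul_pos ha0 hb0,
        mul_pos hhl ha0, mul_pos hhl hb0, sq_nonneg (a-hl), sq_nonneg (b-hl),
        mul_pos (mul_pos ha0 hb0) (sub_pos.2 hab),
        mul_pos (sub_pos.2 hab) (mul_pos hhl hhl)]
    nlinarith [mul_pos hg (mul_pos hhl hhl)]
  have key2 : Real.sqrt (g*a) < Real.sqrt (g*b) :=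
    Real.sqrt_lt_sqrt (by positivity) (mul_lt_mul_of_pos_left hab hg)
  simp only []
  linarith
end

section
/- Let g > 0, h_l > 0, u_l > 0 be real numbers and let h₀ > h_l. Then u₀(h₀) > 0 if and only if f(h₀) < 0, and u₀(h₀) = 0 if and only if f(h₀) = 0, where u₀(h₀) := u_l − √((g/2)·(1/h₀ + 1/h_l))·(h₀ − h_l) and f(h) := h³ − h_l·h² − (h_l² + (2/g)·u_l²·h_l)·h + h_l³. -/
/-- For `h₀ > h_l`: `u₀(h₀) > 0` iff `f(h₀) < 0`, and `u₀(h₀) = 0` iff `f(h₀) = 0`,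
where `u₀(h) = u_l − √((g/2)(1/h + 1/h_l))(h − h_l)` and
`f(h) = h³ − h_l h² − (h_l² + (2/g)u_l²h_l)h + h_l³`. -/
theorem stmt_14 (g hl ul h₀ : ℝ) (hg : 0 < g) (hhl : 0 < hl) (hul : 0 < ul)
    (hh₀ : hl < h₀) :
    (0 < ul - Real.sqrt ((g / 2) * (1 / h₀ + 1 / hl)) * (h₀ - hl) ↔
      h₀ ^ 3 - hl * h₀ ^ 2 - (hl ^ 2 + (2 / g) * ul ^ 2 * hl) * h₀ + hl ^ 3 < 0) ∧
    (ul - Real.sqrt ((g / 2) * (1 / h₀ + 1 / hl)) * (h₀ - hl) = 0 ↔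
      h₀ ^ 3 - hl * h₀ ^ 2 - (hl ^ 2 + (2 / g) * ul ^ 2 * hl) * h₀ + hl ^ 3 = 0) := by
  have hh0 : 0 < h₀ := lt_trans hhl hh₀
  set s := Real.sqrt ((g / 2) * (1 / h₀ + 1 / hl)) with hsdef
  have harg : 0 ≤ (g / 2) * (1 / h₀ + 1 / hl) := by positivity
  have hs2 : s ^ 2 = (g / 2) * (1 / h₀ + 1 / hl) := Real.sq_sqrt harg
  have ht0 : 0 ≤ s * (h₀ - hl) :=
    mul_nonneg (Real.sqrt_nonneg _) (by linarith)
  have hE : h₀ ^ 3 - hl * h₀ ^ 2 - (hl ^ 2 + (2 / g) * ul ^ 2 * hl) * h₀ + hl ^ 3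
      = (2 * hl * h₀ / g) * ((s * (h₀ - hl)) ^ 2 - ul ^ 2) := by
    have hx : (s * (h₀ - hl)) ^ 2 = (g / 2) * (1 / h₀ + 1 / hl) * (h₀ - hl) ^ 2 := by
      rw [mul_pow, hs2]
    rw [hx]
    field_simp
    ring
  have hc : 0 < 2 * hl * h₀ / g := by positivity
  constructor
  · constructor
    · intro h
      rw [hE]
      have hlt : s * (h₀ - hl) < ul := by linarith
      have h2 : (s * (h₀ - hl)) ^ 2 < ul ^ 2 := by nlinarith
      exact mul_neg_of_pos_of_neg hc (by linarith)
    · intro h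
      rw [hE] at h
      have h2 : (s * (h₀ - hl)) ^ 2 < ul ^ 2 := by nlinarith
      nlinarith
  · constructor
    · intro h
      rw [hE]
      have heq : s * (h₀ - hl) = ul := by linarith
      rw [heq]; ring
    · intro h
      rw [hE] at h
      have h2 : (s * (h₀ - hl)) ^ 2 - ul ^ 2 = 0 := by
        rcases mul_eq_zero.mp h with h' | h'
        · exact absurd h' (ne_of_gt hc)
        · exact h'
      have h3 : (s * (h₀ - hl) - ul) * (s * (h₀ - hl) + ul) = 0 := by nlinarith
      rcases mul_eq_zero.mp h3 with h' | h'
      · linarith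
      · linarith
end
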